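/- For all b > 0 and real s > 0, ∫₀^∞ e^{x - b/x} x^{s - 3/2} Γ(1-s, x) dx = 2√π ∫₀^∞ (1 + t²)^{-s} e^{-2√b t} dt, where Γ(p, x) is the upper incomplete Gamma function. -/

import Mathlib

open MeasureTheory Real Set

/-!
Substituting `u = x (1 + t²)` gives
`Γ(1 - s, x) = x ^ (1 - s) e^(-x) ∫₀^∞ 2t (1 + t²)^(-s) e^(-x t²) dt`, so the left side is the
iterated integral of `2t (1 + t²)^(-s) x^(-1/2) e^(-(t² x + b / x))`, a nonnegative function.
Integrating in `x` first, `x = y²` and completing the square reduce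
`∫₀^∞ x^(-1/2) e^(-(a x + b / x)) dx = √(π / a) e^(-2 √(a b))` (here `a = t²`) to the
Cauchy–Schlömilch identity `∫₀^∞ e^(-(α y - β / y)²) dy = √π / (2 α)`. That identity follows
from the substitution `u = α y - β / y`, a bijection of `(0, ∞)` onto `ℝ` with
`du = (α + β / y²) dy`, and the inversion `y ↦ β / (α y)`, which preserves `e^(-(α y - β / y)²)`
and turns `∫ β / y² e^(…)` into `α ∫ e^(…)`. The resulting bound `2 √π e^(-2 √b t)` on the
`t`-integrand justifies Fubini.
-/

/-- Upper incomplete Gamma function `Γ(p, x) = ∫_x^∞ u^(p-1) e^(-u) du`. -/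
noncomputable def uGamma (p x : ℝ) : ℝ := ∫ u in Set.Ioi x, u ^ (p - 1) * Real.exp (-u)

section ChangeOfVariables

variable {E : Type*} [NormedAddCommGroup E] [NormedSpace ℝ E] {α β : ℝ}

lemma hasDerivAt_mul_sub_div (α β : ℝ) {y : ℝ} (hy : y ≠ 0) :
    HasDerivAt (fun y => α * y - β / y) (α + β / y ^ 2) y := by
  simpa [div_eq_mul_inv] using
    ((hasDerivAt_id y).const_mul α).fun_sub ((hasDerivAt_inv hy).const_mul β)

lemma strictMonoOn_mul_sub_div (hα : 0 < α) (hβ : 0 ≤ β) :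
    StrictMonoOn (fun y => α * y - β / y) (Ioi 0) := fun x hx y _ hxy => by
  have : β / y ≤ β / x := div_le_div_of_nonneg_left hβ hx hxy.le
  dsimp only
  nlinarith

lemma image_mul_sub_div_Ioi (hα : 0 < α) (hβ : 0 < β) :
    (fun y => α * y - β / y) '' Ioi 0 = univ := by
  refine eq_univ_of_forall fun u => ?_
  set r := √(u ^ 2 + 4 * α * β)
  have hr : r ^ 2 = u ^ 2 + 4 * α * β := sq_sqrt (by positivity)
  have hur : 0 < u + r := by nlinarith [sqrt_nonneg (u ^ 2 + 4 * α * β), mul_pos hα hβ]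
  refine ⟨(u + r) / (2 * α), div_pos hur (by positivity), ?_⟩
  field_simp
  nlinarith

theorem integral_comp_mul_sub_div_Ioi (hα : 0 < α) (hβ : 0 < β) (g : ℝ → E) :
    ∫ y in Ioi 0, (α + β / y ^ 2) • g (α * y - β / y) = ∫ u, g u := by
  have h := integral_image_eq_integral_abs_deriv_smul measurableSet_Ioi
    (fun y hy => (hasDerivAt_mul_sub_div α β (ne_of_gt hy)).hasDerivWithinAt)
    (strictMonoOn_mul_sub_div hα hβ.le).injOn g
  rw [image_mul_sub_div_Ioi hα hβ, setIntegral_univ] at h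
  rw [h]
  refine setIntegral_congr_fun measurableSet_Ioi fun y (hy : 0 < y) => ?_
  rw [abs_of_pos (by positivity)]

theorem integrableOn_comp_mul_sub_div_Ioi_iff (hα : 0 < α) (hβ : 0 < β) (g : ℝ → E) :
    IntegrableOn (fun y => (α + β / y ^ 2) • g (α * y - β / y)) (Ioi 0) ↔ Integrable g := by
  have h := integrableOn_image_iff_integrableOn_abs_deriv_smul measurableSet_Ioi
    (fun y hy => (hasDerivAt_mul_sub_div α β (ne_of_gt hy)).hasDerivWithinAt)
    (strictMonoOn_mul_sub_div hα hβ.le).injOn g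
  rw [image_mul_sub_div_Ioi hα hβ, integrableOn_univ] at h
  rw [h]
  refine integrableOn_congr_fun (fun y (hy : 0 < y) => ?_) measurableSet_Ioi
  rw [abs_of_pos (by positivity)]

theorem integral_comp_div_Ioi (g : ℝ → E) {c : ℝ} (hc : 0 < c) :
    ∫ y in Ioi 0, (c / y ^ 2) • g (c / y) = ∫ y in Ioi 0, g y := by
  have h := integral_comp_rpow_Ioi (fun y => g (c * y)) (p := -1) (by norm_num)
  rw [integral_comp_mul_left_Ioi g 0 hc, mul_zero] at h
  calc ∫ y in Ioi 0, (c / y ^ 2) • g (c / y)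
      = c • ∫ y in Ioi 0, (|(-1 : ℝ)| * y ^ ((-1 : ℝ) - 1)) • g (c * y ^ (-1 : ℝ)) := by
        rw [← integral_smul]
        refine setIntegral_congr_fun measurableSet_Ioi fun y (hy : 0 < y) => ?_
        rw [smul_smul, rpow_neg_one, show (-1 : ℝ) - 1 = -2 by norm_num, rpow_neg hy.le]
        norm_num
        field_simp
    _ = ∫ y in Ioi 0, g y := by rw [h, smul_inv_smul₀ hc.ne']

end ChangeOfVariables

section CauchySchlomilch

variable {α β : ℝ}

lemma integral_add_div_sq_mul_exp_neg_sq_mul_sub_div (hα : 0 < α) (hβ : 0 < β) :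
    ∫ y in Ioi 0, (α + β / y ^ 2) * exp (-(α * y - β / y) ^ 2) = √π := by
  simpa using (integral_comp_mul_sub_div_Ioi hα hβ (fun u => exp (-u ^ 2))).trans
    (by simpa using integral_gaussian 1)

lemma integrableOn_add_div_sq_mul_exp_neg_sq_mul_sub_div (hα : 0 < α) (hβ : 0 < β) :
    IntegrableOn (fun y => (α + β / y ^ 2) * exp (-(α * y - β / y) ^ 2)) (Ioi 0) := by
  simpa using (integrableOn_comp_mul_sub_div_Ioi_iff hα hβ (fun u => exp (-u ^ 2))).mpr
    (by simpa using integrable_exp_neg_mul_sq one_pos)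

theorem integrableOn_exp_neg_sq_mul_sub_div (hα : 0 < α) (hβ : 0 < β) :
    IntegrableOn (fun y => exp (-(α * y - β / y) ^ 2)) (Ioi 0) := by
  refine ((integrableOn_add_div_sq_mul_exp_neg_sq_mul_sub_div hα hβ).const_mul α⁻¹).mono' ?_ ?_
  · exact (by fun_prop : Measurable fun y => exp (-(α * y - β / y) ^ 2)).aestronglyMeasurable
  · filter_upwards [ae_restrict_mem measurableSet_Ioi] with y (hy : 0 < y)
    rw [norm_of_nonneg (exp_pos _).le, ← mul_assoc, inv_mul_eq_div, add_div, div_self hα.ne']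
    exact le_mul_of_one_le_left (exp_pos _).le (by simp; positivity)

lemma integral_div_sq_mul_exp_neg_sq_mul_sub_div (hα : 0 < α) (hβ : 0 < β) :
    ∫ y in Ioi 0, β / y ^ 2 * exp (-(α * y - β / y) ^ 2)
      = α * ∫ y in Ioi 0, exp (-(α * y - β / y) ^ 2) := by
  rw [← integral_comp_div_Ioi _ (div_pos hβ hα), ← integral_const_mul]
  refine setIntegral_congr_fun measurableSet_Ioi fun y (hy : 0 < y) => ?_
  have : α * (β / α / y) - β / (β / α / y) = -(α * y - β / y) := by field_simp; ring
  rw [smul_eq_mul, this, neg_sq]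
  field_simp

theorem integral_exp_neg_sq_mul_sub_div (hα : 0 < α) (hβ : 0 < β) :
    ∫ y in Ioi 0, exp (-(α * y - β / y) ^ 2) = √π / (2 * α) := by
  have hG := integrableOn_exp_neg_sq_mul_sub_div hα hβ
  have hB : IntegrableOn (fun y => β / y ^ 2 * exp (-(α * y - β / y) ^ 2)) (Ioi 0) :=
    ((integrableOn_add_div_sq_mul_exp_neg_sq_mul_sub_div hα hβ).sub (hG.const_mul α)).congr_fun
      (fun y _ => by simp only [Pi.sub_apply]; ring) measurableSet_Ioi
  rw [eq_div_iff (by positivity)]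
  calc (∫ y in Ioi 0, exp (-(α * y - β / y) ^ 2)) * (2 * α)
      = ∫ y in Ioi 0, α * exp (-(α * y - β / y) ^ 2) + β / y ^ 2 * exp (-(α * y - β / y) ^ 2) := by
        rw [integral_add (hG.const_mul α) hB, integral_const_mul,
          integral_div_sq_mul_exp_neg_sq_mul_sub_div hα hβ]
        ring
    _ = √π := by
        rw [← integral_add_div_sq_mul_exp_neg_sq_mul_sub_div hα hβ]
        simp only [add_mul]

end CauchySchlomilch

section ExpNegAddDiv

variable {a b : ℝ}

lemma exp_neg_mul_sq_add_div_sq (ha : 0 ≤ a) (hb : 0 ≤ b) {y : ℝ} (hy : y ≠ 0) :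
    exp (-(a * y ^ 2 + b / y ^ 2)) = exp (-2 * √(a * b)) * exp (-(√a * y - √b / y) ^ 2) := by
  rw [← exp_add, sqrt_mul ha]
  congr 1
  field_simp
  linear_combination y ^ 4 * sq_sqrt ha + sq_sqrt hb

lemma rpow_neg_half_mul_exp_neg_add_div_comp_sq (ha : 0 ≤ a) (hb : 0 ≤ b) {y : ℝ} (hy : 0 < y) :
    (2 * y ^ ((2 : ℝ) - 1)) •
        ((y ^ (2 : ℝ)) ^ (-(1 / 2) : ℝ) * exp (-(a * y ^ (2 : ℝ) + b / y ^ (2 : ℝ))))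
      = 2 * exp (-2 * √(a * b)) * exp (-(√a * y - √b / y) ^ 2) := by
  rw [← rpow_mul hy.le, rpow_two, exp_neg_mul_sq_add_div_sq ha hb hy.ne', smul_eq_mul]
  norm_num [rpow_neg_one]
  field_simp

theorem integrableOn_rpow_neg_half_mul_exp_neg_add_div (ha : 0 < a) (hb : 0 < b) :
    IntegrableOn (fun x => x ^ (-(1 / 2) : ℝ) * exp (-(a * x + b / x))) (Ioi 0) := by
  rw [← integrableOn_Ioi_comp_rpow_iff _ two_ne_zero, abs_two]
  refine IntegrableOn.congr_fun ((integrableOn_exp_neg_sq_mul_sub_div (sqrt_pos.2 ha)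
    (sqrt_pos.2 hb)).const_mul (2 * exp (-2 * √(a * b)))) (fun y (hy : 0 < y) => ?_)
    measurableSet_Ioi
  rw [rpow_neg_half_mul_exp_neg_add_div_comp_sq ha.le hb.le hy, mul_assoc]

theorem integral_rpow_neg_half_mul_exp_neg_add_div (ha : 0 < a) (hb : 0 < b) :
    ∫ x in Ioi 0, x ^ (-(1 / 2) : ℝ) * exp (-(a * x + b / x))
      = √(π / a) * exp (-2 * √(a * b)) := by
  rw [← integral_comp_rpow_Ioi_of_pos two_pos, setIntegral_congr_fun measurableSet_Ioi
    fun y (hy : 0 < y) => rpow_neg_half_mul_exp_neg_add_div_comp_sq ha.le hb.le hy,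
    integral_const_mul, integral_exp_neg_sq_mul_sub_div (sqrt_pos.2 ha) (sqrt_pos.2 hb),
    sqrt_div' _ ha.le]
  field_simp

end ExpNegAddDiv

theorem uGamma_eq_mul_integral (p : ℝ) {x : ℝ} (hx : 0 < x) :
    uGamma p x
      = x ^ p * exp (-x) * ∫ t in Ioi 0, 2 * t * (1 + t ^ 2) ^ (p - 1) * exp (-(x * t ^ 2)) := by
  have hderiv : ∀ t ∈ Ioi (0 : ℝ),
      HasDerivWithinAt (fun t => x * (1 + t ^ 2)) (x * (2 * t)) (Ioi 0) t := fun t _ => by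
    simpa using (((hasDerivAt_pow 2 t).const_add 1).const_mul x).hasDerivWithinAt
  have hmono : StrictMonoOn (fun t => x * (1 + t ^ 2)) (Ioi 0) := fun t (ht : 0 < t) _ _ hts => by
    dsimp only
    gcongr
  have himage : (fun t => x * (1 + t ^ 2)) '' Ioi 0 = Ioi x := by
    refine Subset.antisymm (image_subset_iff.2 fun t (ht : 0 < t) => ?_) fun u (hu : x < u) => ?_
    · show x < x * (1 + t ^ 2)
      nlinarith [mul_pos hx (pow_pos ht 2)]
    · have hu' : 0 < u / x - 1 := by rw [sub_pos, one_lt_div hx]; exact hu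
      refine ⟨√(u / x - 1), sqrt_pos.2 hu', ?_⟩
      dsimp only
      rw [sq_sqrt hu'.le]
      field_simp
      ring
  rw [uGamma, ← himage, integral_image_eq_integral_abs_deriv_smul measurableSet_Ioi hderiv
    hmono.injOn, ← integral_const_mul]
  refine setIntegral_congr_fun measurableSet_Ioi fun t (ht : 0 < t) => ?_
  rw [abs_of_pos (by positivity), smul_eq_mul, mul_rpow hx.le (by positivity), mul_add, mul_one,
    neg_add, exp_add, rpow_sub_one hx.ne']
  field_simp

theorem integrableOn_one_add_sq_rpow_neg_mul_exp_neg {s c : ℝ} (hs : 0 ≤ s) (hc : 0 < c) :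
    IntegrableOn (fun t => (1 + t ^ 2) ^ (-s) * exp (-c * t)) (Ioi 0) := by
  refine (exp_neg_integrableOn_Ioi 0 hc).mono'
    (by fun_prop : Measurable fun t : ℝ => (1 + t ^ 2) ^ (-s) * exp (-c * t)).aestronglyMeasurable
    ?_
  filter_upwards with t
  rw [norm_of_nonneg (by positivity)]
  exact mul_le_of_le_one_left (exp_pos _).le
    (rpow_le_one_of_one_le_of_nonpos (by nlinarith) (neg_nonpos.2 hs))

noncomputable def uGammaKernel (b s x t : ℝ) : ℝ :=
  2 * t * (1 + t ^ 2) ^ (-s) * (x ^ (-(1 / 2) : ℝ) * exp (-(t ^ 2 * x + b / x)))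

section uGammaKernel

variable {b s x t : ℝ}

lemma integral_uGammaKernel_right (hx : 0 < x) :
    ∫ t in Ioi (0 : ℝ), uGammaKernel b s x t
      = exp (x - b / x) * x ^ (s - 3 / 2) * uGamma (1 - s) x := by
  rw [uGamma_eq_mul_integral _ hx, ← integral_const_mul, ← integral_const_mul]
  refine setIntegral_congr_fun measurableSet_Ioi fun t _ => ?_
  have hpow : x ^ (s - 3 / 2) * x ^ (1 - s) = x ^ (-(1 / 2) : ℝ) := by
    rw [← rpow_add hx]
    ring_nf
  have hexp : exp (x - b / x) * exp (-x) * exp (-(x * t ^ 2)) = exp (-(t ^ 2 * x + b / x)) := by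
    rw [← exp_add, ← exp_add]
    ring_nf
  rw [uGammaKernel, ← hpow, ← hexp, show 1 - s - 1 = -s by ring]
  ring

lemma integral_uGammaKernel_left (hb : 0 < b) (ht : 0 < t) :
    ∫ x in Ioi (0 : ℝ), uGammaKernel b s x t
      = 2 * √π * ((1 + t ^ 2) ^ (-s) * exp (-2 * √b * t)) := by
  simp only [uGammaKernel]
  rw [integral_const_mul, integral_rpow_neg_half_mul_exp_neg_add_div (pow_pos ht 2) hb,
    sqrt_div' _ (sq_nonneg t), sqrt_mul (sq_nonneg t), sqrt_sq ht.le]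
  field_simp

theorem integrable_uGammaKernel (hb : 0 < b) (hs : 0 ≤ s) :
    Integrable (Function.uncurry (uGammaKernel b s))
      ((volume.restrict (Ioi 0)).prod (volume.restrict (Ioi 0))) := by
  have hmeas : Measurable (Function.uncurry (uGammaKernel b s)) := by
    unfold uGammaKernel Function.uncurry
    fun_prop
  refine (integrable_prod_iff' hmeas.aestronglyMeasurable).2 ⟨?_, ?_⟩
  · filter_upwards [ae_restrict_mem measurableSet_Ioi] with t (ht : 0 < t)
    exact (integrableOn_rpow_neg_half_mul_exp_neg_add_div (pow_pos ht 2) hb).const_mul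
      (2 * t * (1 + t ^ 2) ^ (-s))
  · refine IntegrableOn.congr_fun ((integrableOn_one_add_sq_rpow_neg_mul_exp_neg hs
      (by positivity : 0 < 2 * √b)).const_mul (2 * √π)) (fun t (ht : 0 < t) => ?_)
      measurableSet_Ioi
    rw [neg_mul_eq_neg_mul, ← integral_uGammaKernel_left hb ht]
    refine setIntegral_congr_fun measurableSet_Ioi fun x (hx : 0 < x) => ?_
    rw [Function.uncurry_apply_pair, norm_of_nonneg (by unfold uGammaKernel; positivity)]

end uGammaKernel

theorem integral_uGamma_eq_integral (b s : ℝ) (hb : 0 < b) (hs : 0 < s) :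
    ∫ x in Set.Ioi (0:ℝ), Real.exp (x - b / x) * x ^ (s - 3 / 2) * uGamma (1 - s) x
      = 2 * Real.sqrt Real.pi *
        ∫ t in Set.Ioi (0:ℝ), (1 + t ^ 2) ^ (-s) * Real.exp (-2 * Real.sqrt b * t) := by
  calc ∫ x in Ioi 0, exp (x - b / x) * x ^ (s - 3 / 2) * uGamma (1 - s) x
      = ∫ x in Ioi 0, ∫ t in Ioi 0, uGammaKernel b s x t :=
        setIntegral_congr_fun measurableSet_Ioi fun _ hx => (integral_uGammaKernel_right hx).symm
    _ = ∫ t in Ioi 0, ∫ x in Ioi 0, uGammaKernel b s x t :=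
        integral_integral_swap (integrable_uGammaKernel hb hs.le)
    _ = ∫ t in Ioi 0, 2 * √π * ((1 + t ^ 2) ^ (-s) * exp (-2 * √b * t)) :=
        setIntegral_congr_fun measurableSet_Ioi fun _ ht => integral_uGammaKernel_left hb ht
    _ = _ := integral_const_mul _ _
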